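/- On any simple graph class, every RSFOC2 formula of the form φ(x) = ∃^{≥n} y ( φ_{∅}(x,y) ∧ ψ(y) ) — asserting the existence of at least n nodes y with no relation to x that satisfy ψ — is equivalent to the condition N_total − N_adj ≥ n, where N_total is the number of nodes satisfying ψ in the whole graph and N_adj is the number of neighbors of x (via any relation) satisfying ψ. In particular, if ψ is computable from local feature aggregation, φ is computable using one additional global readout comparing a global count with a neighborhood count. -/

import Mathlib

inductive Var : Type
  | x | y
deriving DecidableEq

structure RelGraph (P1 P2 : Type) where
  V : Type
  [fintV : Fintype V]
  [decV : DecidableEq V]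
  unary : P1 → V → Prop
  rel : P2 → V → V → Prop
  [decU : ∀ p, DecidablePred (unary p)]
  [decR : ∀ r, DecidableRel (rel r)]

attribute [instance] RelGraph.fintV RelGraph.decV RelGraph.decU RelGraph.decR

inductive FOC2 (P1 P2 : Type) : Type
  | tru : FOC2 P1 P2
  | atom : P1 → Var → FOC2 P1 P2
  | rel : P2 → Var → Var → FOC2 P1 P2
  | and : FOC2 P1 P2 → FOC2 P1 P2 → FOC2 P1 P2
  | or : FOC2 P1 P2 → FOC2 P1 P2 → FOC2 P1 P2
  | not : FOC2 P1 P2 → FOC2 P1 P2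
  | exge : ℕ → Var → FOC2 P1 P2 → FOC2 P1 P2

variable {P1 P2 : Type}

/-- Satisfaction of a `FOC2` formula in a multi-relational graph under an assignment. -/
def RelGraph.sat (G : RelGraph P1 P2) : (Var → G.V) → FOC2 P1 P2 → Prop
  | _, .tru => True
  | σ, .atom p v => G.unary p (σ v)
  | σ, .rel r u w => G.rel r (σ u) (σ w)
  | σ, .and φ ψ => G.sat σ φ ∧ G.sat σ ψ
  | σ, .or φ ψ => G.sat σ φ ∨ G.sat σ ψ
  | σ, .not φ => ¬ G.sat σ φ
  | σ, .exge n v φ => ∃ S : Finset G.V, S.card = n ∧ ∀ a ∈ S, G.sat (Function.update σ v a) φ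

/-- Quantifier depth. -/
def FOC2.depth : FOC2 P1 P2 → ℕ
  | .tru => 0
  | .atom _ _ => 0
  | .rel _ _ _ => 0
  | .and φ ψ => max φ.depth ψ.depth
  | .or φ ψ => max φ.depth ψ.depth
  | .not φ => φ.depth
  | .exge _ _ φ => φ.depth + 1

/-- All counting thresholds are at most `m`. -/
def FOC2.thresholdsLe (m : ℕ) : FOC2 P1 P2 → Prop
  | .tru => True
  | .atom _ _ => True
  | .rel _ _ _ => True
  | .and φ ψ => φ.thresholdsLe m ∧ ψ.thresholdsLe m
  | .or φ ψ => φ.thresholdsLe m ∧ ψ.thresholdsLe m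
  | .not φ => φ.thresholdsLe m
  | .exge n _ φ => n ≤ m ∧ φ.thresholdsLe m

/-- Free variables. -/
def FOC2.freeVars : FOC2 P1 P2 → Finset Var
  | .tru => ∅
  | .atom _ v => {v}
  | .rel _ u w => {u, w}
  | .and φ ψ => φ.freeVars ∪ ψ.freeVars
  | .or φ ψ => φ.freeVars ∪ ψ.freeVars
  | .not φ => φ.freeVars
  | .exge _ v φ => φ.freeVars \ {v}

/-- Parse-tree size. -/
def FOC2.size : FOC2 P1 P2 → ℕ
  | .tru => 1
  | .atom _ _ => 1
  | .rel _ _ _ => 1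
  | .and φ ψ => φ.size + ψ.size + 1
  | .or φ ψ => φ.size + ψ.size + 1
  | .not φ => φ.size + 1
  | .exge _ _ φ => φ.size + 1


/-- Conjunction of a list of formulas (empty conjunction is `⊤`). -/
def listAnd : List (FOC2 P1 P2) → FOC2 P1 P2
  | [] => FOC2.tru
  | ψ :: l => FOC2.and ψ (listAnd l)

/-- The relation-specification formula `φ_S(u,w)`. -/
noncomputable def phiS [Fintype P2] [DecidableEq P2] (S : Finset P2) (u w : Var) :
    FOC2 P1 P2 :=
  listAnd ((Finset.univ.toList (α := P2)).map
    (fun r => if r ∈ S then FOC2.rel r u w else FOC2.not (FOC2.rel r u w)))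

namespace RelGraph

variable (G : RelGraph P1 P2)

theorem sat_congr {φ : FOC2 P1 P2} {σ τ : Var → G.V} (h : ∀ w ∈ φ.freeVars, σ w = τ w) :
    G.sat σ φ ↔ G.sat τ φ := by
  induction φ generalizing σ τ with
  | tru => rfl
  | atom p v => simp [sat, h v (by simp [FOC2.freeVars])]
  | rel r u w => simp [sat, h u (by simp [FOC2.freeVars]), h w (by simp [FOC2.freeVars])]
  | and φ ψ ihφ ihψ | or φ ψ ihφ ihψ =>
      simp only [FOC2.freeVars, Finset.mem_union] at h
      simp only [sat]
      rw [ihφ fun w hw => h w (.inl hw), ihψ fun w hw => h w (.inr hw)]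
  | not φ ih => exact not_congr (ih h)
  | exge m v φ ih =>
      refine exists_congr fun S => and_congr_right fun _ =>
        forall₂_congr fun a _ => ih fun w hw => ?_
      by_cases hwv : w = v
      · subst hwv
        simp
      · simp only [Function.update_of_ne hwv]
        exact h w (by simp [FOC2.freeVars, hw, hwv])

theorem sat_update_iff_sat_const {ψ : FOC2 P1 P2} {w : Var} (hψ : ψ.freeVars ⊆ {w})
    (σ : Var → G.V) (a : G.V) : G.sat (Function.update σ w a) ψ ↔ G.sat (fun _ => a) ψ :=
  G.sat_congr fun u hu => by
    obtain rfl : u = w := Finset.mem_singleton.mp (hψ hu)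
    simp

theorem sat_listAnd (σ : Var → G.V) (l : List (FOC2 P1 P2)) :
    G.sat σ (listAnd l) ↔ ∀ φ ∈ l, G.sat σ φ := by
  induction l with
  | nil => simp [listAnd, sat]
  | cons φ l ih => simp [listAnd, sat, ih]

theorem sat_phiS_empty [Fintype P2] [DecidableEq P2] (σ : Var → G.V) (u w : Var) :
    G.sat σ (phiS ∅ u w) ↔ ∀ r : P2, ¬ G.rel r (σ u) (σ w) := by
  simp [phiS, sat_listAnd, sat]

theorem sat_exge_iff_le_ncard (σ : Var → G.V) (n : ℕ) (v : Var) (φ : FOC2 P1 P2) :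
    G.sat σ (.exge n v φ) ↔ n ≤ {a : G.V | G.sat (Function.update σ v a) φ}.ncard := by
  constructor
  · rintro ⟨S, rfl, hS⟩
    rw [← Set.ncard_coe_finset]
    exact Set.ncard_le_ncard fun a ha => hS a ha
  · intro h
    obtain ⟨t, hts, rfl⟩ := Set.exists_subset_card_eq h
    exact ⟨(Set.toFinite t).toFinset, (Set.ncard_eq_toFinset_card t _).symm,
      fun a ha => hts ((Set.toFinite t).mem_toFinset.mp ha)⟩

end RelGraph

theorem Set.le_ncard_sdiff_iff {α : Type*} [Finite α] {s t : Set α} (hst : s ⊆ t) (n : ℕ) :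
    n ≤ (t \ s).ncard ↔ n + s.ncard ≤ t.ncard := by
  have := Set.ncard_le_ncard hst
  rw [Set.ncard_sdiff hst]
  omega

theorem stmt11_general {P1 P2 : Type} [Fintype P2] [DecidableEq P2] (G : RelGraph P1 P2)
    (ψ : FOC2 P1 P2) (hψ : ψ.freeVars ⊆ {Var.y}) (n : ℕ) (v : G.V) :
    (G.sat (fun _ => v) (FOC2.exge n Var.y (FOC2.and (phiS ∅ Var.x Var.y) ψ)) ↔
      n + {u : G.V | (∃ r : P2, G.rel r v u) ∧ G.sat (fun _ => u) ψ}.ncard ≤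
        {u : G.V | G.sat (fun _ => u) ψ}.ncard) := by
  have hnonadj : {a : G.V | G.sat (Function.update (fun _ => v) Var.y a)
        (FOC2.and (phiS ∅ Var.x Var.y) ψ)} =
      {u | G.sat (fun _ => u) ψ} \ {u | (∃ r : P2, G.rel r v u) ∧ G.sat (fun _ => u) ψ} := by
    ext a
    simp only [RelGraph.sat, G.sat_phiS_empty, G.sat_update_iff_sat_const hψ]
    simp +contextual [and_comm]
  rw [G.sat_exge_iff_le_ncard, hnonadj, Set.le_ncard_sdiff_iff fun _ hu => hu.2]

/-- On simple graphs, `∃^{≥n} y (φ_∅(x,y) ∧ ψ(y))` holds at `v` iff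
`N_total − N_adj ≥ n`, where `N_total` counts the nodes satisfying `ψ` and `N_adj`
counts the neighbours of `v` (via any relation) satisfying `ψ`. -/
theorem stmt11 {P1 P2 : Type} [Fintype P2] [DecidableEq P2] (G : RelGraph P1 P2)
    (hsimple : ∀ (a b : G.V) (r s : P2), G.rel r a b → G.rel s a b → r = s)
    (ψ : FOC2 P1 P2) (hψ : ψ.freeVars ⊆ {Var.y}) (n : ℕ) (v : G.V) :
    (G.sat (fun _ => v) (FOC2.exge n Var.y (FOC2.and (phiS ∅ Var.x Var.y) ψ)) ↔
      n + {u : G.V | (∃ r : P2, G.rel r v u) ∧ G.sat (fun _ => u) ψ}.ncard ≤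
        {u : G.V | G.sat (fun _ => u) ψ}.ncard) :=
  stmt11_general G ψ hψ n v
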